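/- Let q ≥ 2 be an integer and let j = ω(q^3 − 1). For i ≥ 1 let t_i denote the i-th smallest prime not congruent to 1 modulo 3 (that is, congruent to 0 or 2 modulo 3), and let u_i denote the i-th smallest prime congruent to 1 modulo 3. Then q ≥ min over 0 ≤ m ≤ j of max{ t_1⋯t_m + 1 , (t_1⋯t_m · u_1⋯u_{j−m} + 1)^{1/3} }, where empty products equal 1 and the 1/3-rd power is a real power. -/

import Mathlib

/-!
Split the prime factors of `q ^ 3 - 1` into the set `A` of those `≢ 1 (mod 3)` and the set `B`
of those `≡ 1 (mod 3)`, and take `m = #A`. A prime `p ≢ 1 (mod 3)` dividing `q ^ 3 - 1` divides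
`q - 1`, since otherwise `q` has order `3` in `(ZMod p)ˣ` and `3 ∣ p - 1`; hence `∏ A ≤ q - 1`.
Moreover `∏ A * ∏ B ≤ q ^ 3 - 1`. Since any `k` distinct numbers satisfying a predicate have
product at least that of the `k` smallest such numbers, both terms of the maximum at `m` are `≤ q`.
-/

open Finset

namespace Nat

theorem nth_lt_of_lt_card {P : ℕ → Prop} [DecidablePred P] {s : Finset ℕ} {n k : ℕ}
    (hs : ∀ x ∈ s, P x ∧ x < k) (hn : n < #s) : nth P n < k := by
  refine nth_lt_of_lt_count (hn.trans_le ?_)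
  rw [count_eq_card_filter_range]
  exact card_le_card fun x hx => by simpa [and_comm] using hs x hx

theorem prod_range_nth_le_prod {P : ℕ → Prop} {s : Finset ℕ} (hs : ∀ x ∈ s, P x) :
    ∏ i ∈ range #s, nth P i ≤ ∏ x ∈ s, x := by
  classical
  induction s using Finset.induction_on_max with
  | empty => simp
  | insert a s hlt ih =>
    have ha : a ∉ s := fun h => (hlt a h).false
    have hnth : nth P #s ≤ a := by
      refine Nat.le_of_lt_succ (nth_lt_of_lt_card (s := insert a s) (fun x hx => ⟨hs x hx, ?_⟩)
        (by simp [ha]))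
      rcases mem_insert.mp hx with rfl | hx
      · exact lt_succ_self x
      · exact (hlt x hx).trans (lt_succ_self a)
    rw [card_insert_of_notMem ha, prod_range_succ, prod_insert ha, mul_comm a]
    exact Nat.mul_le_mul (ih fun x hx => hs x (mem_insert_of_mem hx)) hnth

theorem Prime.dvd_sub_one_of_dvd_pow_sub_one {p ℓ q : ℕ} (hp : p.Prime) (hℓ : ℓ.Prime)
    (hdvd : p ∣ q ^ ℓ - 1) (hpℓ : p % ℓ ≠ 1) : p ∣ q - 1 := by
  have := Fact.mk hp
  have := Fact.mk hℓ
  rcases q.eq_zero_or_pos with rfl | hq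
  · simp
  have hpow : (q : ZMod p) ^ ℓ = 1 := by
    have := (ZMod.natCast_eq_zero_iff _ p).mpr hdvd
    rwa [Nat.cast_sub (Nat.one_le_pow _ _ hq), Nat.cast_pow, Nat.cast_one, sub_eq_zero] at this
  by_cases h1 : (q : ZMod p) = 1
  · exact (ZMod.natCast_eq_zero_iff _ p).mp (by push_cast [Nat.cast_sub hq, h1]; ring)
  · have hq0 : (q : ZMod p) ≠ 0 := fun h0 => by simp [h0, hℓ.ne_zero] at hpow
    have hℓp : ℓ ∣ p - 1 := orderOf_eq_prime hpow h1 ▸ ZMod.orderOf_dvd_card_sub_one hq0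
    have hmod := (Nat.modEq_iff_dvd' hp.one_lt.le).mpr hℓp
    rw [Nat.ModEq, Nat.mod_eq_of_lt hℓ.one_lt] at hmod
    exact absurd hmod.symm hpℓ

theorem prod_primeFactors_filter_mod_ne_one_dvd_sub_one {ℓ : ℕ} (hℓ : ℓ.Prime) (q : ℕ) :
    ∏ p ∈ (q ^ ℓ - 1).primeFactors with p % ℓ ≠ 1, p ∣ q - 1 := by
  refine prod_primes_dvd _ (fun p hp => ?_) (fun p hp => ?_) <;>
    obtain ⟨hpq, hpℓ⟩ := mem_filter.mp hp
  · exact (prime_of_mem_primeFactors hpq).prime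
  · exact (prime_of_mem_primeFactors hpq).dvd_sub_one_of_dvd_pow_sub_one hℓ
      (dvd_of_mem_primeFactors hpq) hpℓ

end Nat

theorem Real.rpow_one_div_three_le {x y : ℝ} (hx : 0 ≤ x) (hy : 0 ≤ y) (h : x ≤ y ^ 3) :
    x ^ ((1 : ℝ) / 3) ≤ y := by
  rw [one_div, Real.rpow_inv_le_iff_of_pos hx hy (by norm_num)]
  exact_mod_cast h

/-- The hybrid lower bound for `q` in terms of `j = ω(q^3 - 1)`: with `t_i` the
`i`-th smallest prime not congruent to `1 (mod 3)` (i.e. `≡ 0` or `2 (mod 3)`)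
and `u_i` the `i`-th smallest prime congruent to `1 (mod 3)`,
`q ≥ min_{0 ≤ m ≤ j} max{ t_1⋯t_m + 1, (t_1⋯t_m · u_1⋯u_{j-m} + 1)^(1/3) }`. -/
theorem stmt15 (q : ℕ) (hq : 2 ≤ q) :
    (q : ℝ) ≥ (Finset.range ((q ^ 3 - 1).primeFactors.card + 1)).inf'
      (by simp)
      (fun m => max
        (((∏ i ∈ Finset.range m, Nat.nth (fun p => p.Prime ∧ p % 3 ≠ 1) i : ℕ) : ℝ) + 1)
        ((((∏ i ∈ Finset.range m, Nat.nth (fun p => p.Prime ∧ p % 3 ≠ 1) i) *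
            (∏ i ∈ Finset.range ((q ^ 3 - 1).primeFactors.card - m),
              Nat.nth (fun p => p.Prime ∧ p % 3 = 1) i) : ℕ) + 1 : ℝ) ^ ((1 : ℝ) / 3))) := by
  set S := (q ^ 3 - 1).primeFactors
  set A := {p ∈ S | p % 3 ≠ 1}
  set B := {p ∈ S | p % 3 = 1}
  have hcard : #B = #S - #A := Nat.eq_sub_of_add_eq (card_filter_add_card_filter_not _)
  have hA : ∏ i ∈ range #A, Nat.nth (fun p => p.Prime ∧ p % 3 ≠ 1) i ≤ ∏ p ∈ A, p :=
    Nat.prod_range_nth_le_prod fun p hp =>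
      ⟨Nat.prime_of_mem_primeFactors (mem_filter.mp hp).1, (mem_filter.mp hp).2⟩
  have hB : ∏ i ∈ range (#S - #A), Nat.nth (fun p => p.Prime ∧ p % 3 = 1) i ≤ ∏ p ∈ B, p :=
    hcard ▸ Nat.prod_range_nth_le_prod fun p hp =>
      ⟨Nat.prime_of_mem_primeFactors (mem_filter.mp hp).1, (mem_filter.mp hp).2⟩
  have hAq : ∏ p ∈ A, p ≤ q - 1 :=
    Nat.le_of_dvd (by omega) (Nat.prod_primeFactors_filter_mod_ne_one_dvd_sub_one Nat.prime_three q)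
  have hSq : (∏ p ∈ A, p) * ∏ p ∈ B, p ≤ q ^ 3 - 1 := by
    rw [mul_comm, prod_filter_mul_prod_filter_not]
    exact Nat.le_of_dvd (Nat.sub_pos_of_lt (Nat.one_lt_pow (by norm_num) (by omega)))
      (Nat.prod_primeFactors_dvd _)
  have hfirst : ∏ i ∈ range #A, Nat.nth (fun p => p.Prime ∧ p % 3 ≠ 1) i + 1 ≤ q := by omega
  have hsecond : (∏ i ∈ range #A, Nat.nth (fun p => p.Prime ∧ p % 3 ≠ 1) i) *
      ∏ i ∈ range (#S - #A), Nat.nth (fun p => p.Prime ∧ p % 3 = 1) i + 1 ≤ q ^ 3 := by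
    have := Nat.mul_le_mul hA hB
    have := Nat.one_le_pow 3 q (by omega)
    omega
  have hm : #A ∈ range (#S + 1) := mem_range.mpr (Nat.lt_succ_of_le (card_filter_le _ _))
  refine (inf'_le _ hm).trans
    (max_le ?_ (Real.rpow_one_div_three_le (by positivity) (by positivity) ?_))
  · exact_mod_cast hfirst
  · exact_mod_cast hsecond
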